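/- arXiv:2501.12915 — 2 statements merged into one kernel-verified Lean document; each statement's English description precedes it below -/
import Mathlib

section
/- The curvature tensor of the oscillator algebra 𝔤ₙ(λ) is given in invariant form by R(X,Y)Z = (1/2) g(φX, Y) φZ + (1/4)(g(φX, Z) φY − g(φY, Z) φX) + (1/4)(η(Y) X − η(X) Y) η(Z) + (1/4)(η(X) g(Y,Z) − η(Y) g(X,Z)) ξ + (1/4)(η(X) θ(Y) − η(Y) θ(X))(η(Z) ζ − θ(Z) ξ), for all X, Y, Z ∈ 𝔤ₙ(λ). -/
open scoped RealInnerProductSpace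
open Finset

noncomputable section

/-- The underlying inner product space of the oscillator algebra `𝔤ₙ(λ)`:
a `(2n+2)`-dimensional real inner product space. -/
abbrev Osc (n : ℕ) := EuclideanSpace ℝ (Fin (2*n+2))

/-- The basis vectors `e₁, …, eₙ`. -/
def oe (n : ℕ) (i : Fin n) : Osc n :=
  EuclideanSpace.single ⟨i.1, by have := i.2; omega⟩ 1

/-- The basis vectors `e_{n+1}, …, e_{2n}`. -/
def oE (n : ℕ) (i : Fin n) : Osc n :=
  EuclideanSpace.single ⟨n + i.1, by have := i.2; omega⟩ 1

/-- The basis vector `ξ`. -/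
def oXi (n : ℕ) : Osc n := EuclideanSpace.single ⟨2*n, by omega⟩ 1

/-- The basis vector `ζ`. -/
def oZeta (n : ℕ) : Osc n := EuclideanSpace.single ⟨2*n+1, by omega⟩ 1

/-- `br` is the Lie bracket of the oscillator algebra `𝔤ₙ(λ)`: the bilinear map
determined by `[eᵢ, e_{n+j}] = δᵢⱼ ξ`, `[ζ, eⱼ] = λⱼ e_{n+j}`, `[ζ, e_{n+j}] = −λⱼ eⱼ`,
all other brackets of basis vectors being zero. -/
structure IsOscBracket (n : ℕ) (lam : Fin n → ℝ)
    (br : Osc n →ₗ[ℝ] Osc n →ₗ[ℝ] Osc n) : Prop where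
  anti : ∀ X Y : Osc n, br X Y = - br Y X
  ee : ∀ i j : Fin n, br (oe n i) (oe n j) = 0
  eE : ∀ i j : Fin n, br (oe n i) (oE n j) = if i = j then oXi n else 0
  EE : ∀ i j : Fin n, br (oE n i) (oE n j) = 0
  exi : ∀ i : Fin n, br (oe n i) (oXi n) = 0
  Exi : ∀ i : Fin n, br (oE n i) (oXi n) = 0
  zee : ∀ j : Fin n, br (oZeta n) (oe n j) = lam j • oE n j
  zeE : ∀ j : Fin n, br (oZeta n) (oE n j) = - (lam j • oe n j)
  xize : br (oXi n) (oZeta n) = 0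

/-- `nab` is the Levi-Civita connection of the left-invariant metric (evaluated on
left-invariant fields): the bilinear map determined by the Koszul formula
`2 g(∇_X Y, Z) = g([X,Y], Z) − g([Y,Z], X) + g([Z,X], Y)`. -/
def IsLeviCivita (n : ℕ) (br nab : Osc n →ₗ[ℝ] Osc n →ₗ[ℝ] Osc n) : Prop :=
  ∀ X Y Z : Osc n,
    2 * ⟪nab X Y, Z⟫ = ⟪br X Y, Z⟫ - ⟪br Y Z, X⟫ + ⟪br Z X, Y⟫

/-- The Nomizu operator `A_V X = −∇_X V`. -/
def nomizu {n : ℕ} (nab : Osc n →ₗ[ℝ] Osc n →ₗ[ℝ] Osc n) (V X : Osc n) : Osc n :=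
  -(nab X V)

/-- The covariant derivative of the Nomizu operator:
`(∇_X A_V) Y = ∇_X (A_V Y) − A_V (∇_X Y)`. -/
def covNomizu {n : ℕ} (nab : Osc n →ₗ[ℝ] Osc n →ₗ[ℝ] Osc n) (V X Y : Osc n) : Osc n :=
  nab X (nomizu nab V Y) - nomizu nab V (nab X Y)

/-- The curvature tensor `R(X,Y)Z = ∇_X ∇_Y Z − ∇_Y ∇_X Z − ∇_{[X,Y]} Z`. -/
def curvR {n : ℕ} (br nab : Osc n →ₗ[ℝ] Osc n →ₗ[ℝ] Osc n) (X Y Z : Osc n) : Osc n :=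
  nab X (nab Y Z) - nab Y (nab X Z) - nab (br X Y) Z

/-- A unit vector `V ∈ 𝔤ₙ(λ)` is a *minimal* unit vector field if there is an orthonormal
basis `u₁, …, u_{2n+2}` of eigenvectors of `A_Vᵀ A_V` (the eigenvector condition being
expressed as `g(A_V W, A_V uᵢ) = σᵢ² g(W, uᵢ)` for all `W`) with eigenvalues `σᵢ²` such that
`Σᵢ ((∇_{uᵢ} A_V)uᵢ + A_V R(V, A_V uᵢ)uᵢ)/(1 + σᵢ²) = (Σᵢ σᵢ²/(1 + σᵢ²)) V`. -/
def IsMinimal {n : ℕ} (br nab : Osc n →ₗ[ℝ] Osc n →ₗ[ℝ] Osc n) (V : Osc n) : Prop :=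
  ∃ (u : Fin (2*n+2) → Osc n) (σ : Fin (2*n+2) → ℝ),
    (∀ i j, ⟪u i, u j⟫ = if i = j then 1 else 0) ∧
    (∀ i, ∀ W : Osc n,
      ⟪nomizu nab V W, nomizu nab V (u i)⟫ = (σ i)^2 * ⟪W, u i⟫) ∧
    (∑ i, (1 + (σ i)^2)⁻¹ •
        (covNomizu nab V (u i) (u i) +
          nomizu nab V (curvR br nab V (nomizu nab V (u i)) (u i))))
      = (∑ i, (σ i)^2 / (1 + (σ i)^2)) • V

/-- The operator `φ` with `φ eᵢ = e_{n+i}`, `φ e_{n+i} = −eᵢ`, `φ ξ = φ ζ = 0`. -/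
structure IsPhi (n : ℕ) (phi : Osc n →ₗ[ℝ] Osc n) : Prop where
  he : ∀ i : Fin n, phi (oe n i) = oE n i
  hE : ∀ i : Fin n, phi (oE n i) = - oe n i
  hxi : phi (oXi n) = 0
  hzeta : phi (oZeta n) = 0

/-- The operator `E_λ` with `E_λ eᵢ = λᵢ eᵢ`, `E_λ e_{n+i} = λᵢ e_{n+i}`, `E_λ ξ = E_λ ζ = 0`. -/
structure IsElam (n : ℕ) (lam : Fin n → ℝ) (El : Osc n →ₗ[ℝ] Osc n) : Prop where
  he : ∀ i : Fin n, El (oe n i) = lam i • oe n i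
  hE : ∀ i : Fin n, El (oE n i) = lam i • oE n i
  hxi : El (oXi n) = 0
  hzeta : El (oZeta n) = 0

/-!
With `B = ad ζ` the bracket of `𝔤ₙ(λ)` takes the invariant form
`[V, W] = g(φV, W) ξ + θ(V) B W − θ(W) B V`, where `φ` and `B` are skew and commute,
`φ² = −1 + η ⊗ ξ + θ ⊗ ζ` and `φ ξ = B ξ = B ζ = 0`. The Koszul formula then gives
`∇_V W = ½ g(φV, W) ξ − ½ η(V) φW − ½ η(W) φV + θ(V) B W`. Expanding `R` with this, every
`B`-term cancels: `θ(X) θ(Y) B²Z` is symmetric in `X, Y`, `θ([X, Y]) = 0`, and the mixed terms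
cancel by skewness of `B` and `Bφ = φB`. So `R` does not depend on `λ`.
-/

/-- The identities of `φ`, `B = ad ζ`, `ξ` and `ζ` in `𝔤ₙ(λ)` on which the curvature computation
rests. -/
structure IsOscillatorFrame {E : Type*} [NormedAddCommGroup E] [InnerProductSpace ℝ E]
    (φ B : E →ₗ[ℝ] E) (ξ ζ : E) : Prop where
  inner_φ_left : ∀ V W, ⟪φ V, W⟫ = -⟪V, φ W⟫
  φ_φ : ∀ W, φ (φ W) = -W + ⟪W, ξ⟫ • ξ + ⟪W, ζ⟫ • ζ
  φ_ξ : φ ξ = 0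
  inner_B_left : ∀ V W, ⟪B V, W⟫ = -⟪V, B W⟫
  B_φ : ∀ W, B (φ W) = φ (B W)
  B_ξ : B ξ = 0
  B_ζ : B ζ = 0
  inner_ξ_ξ : ⟪ξ, ξ⟫ = 1
  inner_ξ_ζ : ⟪ξ, ζ⟫ = 0

namespace IsOscillatorFrame

variable {E : Type*} [NormedAddCommGroup E] [InnerProductSpace ℝ E]
  {φ B : E →ₗ[ℝ] E} {ξ ζ : E} (F : IsOscillatorFrame φ B ξ ζ)
include F

lemma inner_φ_swap (V W : E) : ⟪φ V, W⟫ = -⟪φ W, V⟫ := by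
  rw [F.inner_φ_left, real_inner_comm]

lemma inner_B_swap (V W : E) : ⟪B V, W⟫ = -⟪B W, V⟫ := by
  rw [F.inner_B_left, real_inner_comm]

lemma inner_φ_ξ (W : E) : ⟪φ W, ξ⟫ = 0 := by
  rw [F.inner_φ_left, F.φ_ξ, inner_zero_right, neg_zero]

lemma inner_B_ξ (W : E) : ⟪B W, ξ⟫ = 0 := by
  rw [F.inner_B_left, F.B_ξ, inner_zero_right, neg_zero]

lemma inner_B_ζ (W : E) : ⟪B W, ζ⟫ = 0 := by
  rw [F.inner_B_left, F.B_ζ, inner_zero_right, neg_zero]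

lemma inner_φ_φ (V W : E) : ⟪φ V, φ W⟫ = ⟪V, W⟫ - ⟪V, ξ⟫ * ⟪W, ξ⟫ - ⟪V, ζ⟫ * ⟪W, ζ⟫ := by
  rw [F.inner_φ_left, F.φ_φ]
  simp only [inner_add_right, inner_neg_right, real_inner_smul_right]
  ring

lemma inner_φ_B (V W : E) : ⟪φ (B V), W⟫ = -⟪φ V, B W⟫ := by
  rw [F.inner_φ_left, F.inner_B_left, F.B_φ, F.inner_φ_left V]

lemma leviCivita_eq {br nab : E → E → E}
    (hbr : ∀ V W, br V W = ⟪φ V, W⟫ • ξ + ⟪V, ζ⟫ • B W - ⟪W, ζ⟫ • B V)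
    (hlc : ∀ X Y Z, 2 * ⟪nab X Y, Z⟫ = ⟪br X Y, Z⟫ - ⟪br Y Z, X⟫ + ⟪br Z X, Y⟫) (V W : E) :
    nab V W = (2⁻¹ * ⟪φ V, W⟫) • ξ - (2⁻¹ * ⟪V, ξ⟫) • φ W - (2⁻¹ * ⟪W, ξ⟫) • φ V
      + ⟪V, ζ⟫ • B W := by
  refine ext_inner_right ℝ fun U => mul_left_cancel₀ (two_ne_zero (α := ℝ)) ?_
  rw [hlc, hbr, hbr, hbr]
  simp only [inner_add_left, inner_sub_left, real_inner_smul_left]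
  rw [F.inner_φ_swap U, F.inner_B_swap U V, F.inner_B_swap U W, F.inner_B_swap W V,
    real_inner_comm V ξ, real_inner_comm W ξ]
  ring

lemma curvature_eq {br nab : E → E → E}
    (hbr : ∀ V W, br V W = ⟪φ V, W⟫ • ξ + ⟪V, ζ⟫ • B W - ⟪W, ζ⟫ • B V)
    (hnab : ∀ V W, nab V W = (2⁻¹ * ⟪φ V, W⟫) • ξ - (2⁻¹ * ⟪V, ξ⟫) • φ W
      - (2⁻¹ * ⟪W, ξ⟫) • φ V + ⟪V, ζ⟫ • B W) (X Y Z : E) :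
    nab X (nab Y Z) - nab Y (nab X Z) - nab (br X Y) Z =
        ((1/2) * ⟪φ X, Y⟫) • φ Z
        + ((1/4) : ℝ) • (⟪φ X, Z⟫ • φ Y - ⟪φ Y, Z⟫ • φ X)
        + ((1/4) * ⟪Z, ξ⟫) • (⟪Y, ξ⟫ • X - ⟪X, ξ⟫ • Y)
        + ((1/4) * (⟪X, ξ⟫ * ⟪Y, Z⟫ - ⟪Y, ξ⟫ * ⟪X, Z⟫)) • ξ
        + ((1/4) * (⟪X, ξ⟫ * ⟪Y, ζ⟫ - ⟪Y, ξ⟫ * ⟪X, ζ⟫)) •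
            (⟪Z, ξ⟫ • ζ - ⟪Z, ζ⟫ • ξ) := by
  simp only [hnab, hbr, map_add, map_sub, map_smul, inner_add_left, inner_sub_left,
    real_inner_smul_left, inner_add_right, inner_sub_right, real_inner_smul_right,
    smul_add, smul_sub, smul_neg, smul_smul, F.φ_ξ, F.B_ξ, F.inner_φ_ξ, F.inner_B_ξ, F.inner_B_ζ,
    F.inner_ξ_ξ, F.inner_ξ_ζ, F.inner_φ_φ, F.φ_φ, F.B_φ, F.inner_φ_B,
    zero_smul, smul_zero, add_zero, zero_add, mul_zero, sub_zero, zero_sub]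
  rw [real_inner_comm Y X]
  module

end IsOscillatorFrame

namespace Osc
variable {n : ℕ}

lemma single_one_cases (k : Fin (2 * n + 2)) :
    (∃ i, EuclideanSpace.single k 1 = oe n i) ∨ (∃ i, EuclideanSpace.single k 1 = oE n i) ∨
      EuclideanSpace.single k 1 = oXi n ∨ EuclideanSpace.single k 1 = oZeta n := by
  obtain ⟨k, hk⟩ := k
  rcases lt_or_ge k n with hn | hn
  · exact Or.inl ⟨⟨k, hn⟩, rfl⟩
  rcases lt_or_ge k (2 * n) with h2n | h2n
  · exact Or.inr <| Or.inl ⟨⟨k - n, by omega⟩, by rw [oE]; congr; dsimp only; omega⟩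
  rcases eq_or_ne k (2 * n) with rfl | hξ
  · exact Or.inr <| Or.inr <| Or.inl rfl
  · exact Or.inr <| Or.inr <| Or.inr <| by rw [oZeta]; congr; omega

theorem linearMap_ext {M : Type*} [AddCommGroup M] [Module ℝ M] {f g : Osc n →ₗ[ℝ] M}
    (he : ∀ i, f (oe n i) = g (oe n i)) (hE : ∀ i, f (oE n i) = g (oE n i))
    (hξ : f (oXi n) = g (oXi n)) (hζ : f (oZeta n) = g (oZeta n)) : f = g := by
  refine (EuclideanSpace.basisFun (Fin (2 * n + 2)) ℝ).toBasis.ext fun k => ?_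
  rw [OrthonormalBasis.coe_toBasis, EuclideanSpace.basisFun_apply]
  rcases single_one_cases k with ⟨i, h⟩ | ⟨i, h⟩ | h | h <;> rw [h]
  exacts [he i, hE i, hξ, hζ]

lemma inner_single_one (p q : Fin (2 * n + 2)) :
    ⟪(EuclideanSpace.single p 1 : Osc n), EuclideanSpace.single q 1⟫ = if p = q then 1 else 0 :=
  orthonormal_iff_ite.mp EuclideanSpace.orthonormal_single p q

lemma inner_single_one_of_val_ne {p q : Fin (2 * n + 2)} (h : p.val ≠ q.val) :
    ⟪(EuclideanSpace.single p 1 : Osc n), EuclideanSpace.single q 1⟫ = 0 := by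
  rw [inner_single_one, if_neg (Fin.val_ne_iff.mp h)]

@[simp] lemma inner_oe_oe (i j : Fin n) : ⟪oe n i, oe n j⟫ = if i = j then 1 else 0 := by
  simp [oe, inner_single_one, Fin.ext_iff]

@[simp] lemma inner_oE_oE (i j : Fin n) : ⟪oE n i, oE n j⟫ = if i = j then 1 else 0 := by
  simp [oE, inner_single_one, Fin.ext_iff]

@[simp] lemma inner_oe_oE (i j : Fin n) : ⟪oe n i, oE n j⟫ = 0 :=
  inner_single_one_of_val_ne (by dsimp only; omega)

@[simp] lemma inner_oe_oXi (i : Fin n) : ⟪oe n i, oXi n⟫ = 0 :=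
  inner_single_one_of_val_ne (by dsimp only; omega)

@[simp] lemma inner_oe_oZeta (i : Fin n) : ⟪oe n i, oZeta n⟫ = 0 :=
  inner_single_one_of_val_ne (by dsimp only; omega)

@[simp] lemma inner_oE_oXi (i : Fin n) : ⟪oE n i, oXi n⟫ = 0 :=
  inner_single_one_of_val_ne (by dsimp only; omega)

@[simp] lemma inner_oE_oZeta (i : Fin n) : ⟪oE n i, oZeta n⟫ = 0 :=
  inner_single_one_of_val_ne (by dsimp only; omega)

@[simp] lemma inner_oXi_oZeta : ⟪oXi n, oZeta n⟫ = 0 :=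
  inner_single_one_of_val_ne (by dsimp only; omega)

@[simp] lemma inner_oE_oe (i j : Fin n) : ⟪oE n i, oe n j⟫ = 0 := by
  rw [real_inner_comm, inner_oe_oE]

@[simp] lemma inner_oXi_oe (i : Fin n) : ⟪oXi n, oe n i⟫ = 0 := by
  rw [real_inner_comm, inner_oe_oXi]

@[simp] lemma inner_oZeta_oe (i : Fin n) : ⟪oZeta n, oe n i⟫ = 0 := by
  rw [real_inner_comm, inner_oe_oZeta]

@[simp] lemma inner_oXi_oE (i : Fin n) : ⟪oXi n, oE n i⟫ = 0 := by
  rw [real_inner_comm, inner_oE_oXi]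

@[simp] lemma inner_oZeta_oE (i : Fin n) : ⟪oZeta n, oE n i⟫ = 0 := by
  rw [real_inner_comm, inner_oE_oZeta]

@[simp] lemma inner_oZeta_oXi : ⟪oZeta n, oXi n⟫ = 0 := by
  rw [real_inner_comm, inner_oXi_oZeta]

@[simp] lemma norm_oXi : ‖oXi n‖ = 1 := by simp [oXi]

@[simp] lemma norm_oZeta : ‖oZeta n‖ = 1 := by simp [oZeta]

end Osc

namespace IsPhi
variable {n : ℕ} {phi : Osc n →ₗ[ℝ] Osc n}

lemma inner_apply_left (hphi : IsPhi n phi) (V W : Osc n) : ⟪phi V, W⟫ = -⟪V, phi W⟫ := by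
  have h : (innerₗ (Osc n)).comp phi = -(innerₗ (Osc n)).compl₂ phi := by
    apply Osc.linearMap_ext <;> intros <;> apply Osc.linearMap_ext <;> intros <;>
      simp [hphi.he, hphi.hE, hphi.hxi, hphi.hzeta]
  simpa using LinearMap.congr_fun₂ h V W

lemma apply_apply (hphi : IsPhi n phi) (W : Osc n) :
    phi (phi W) = -W + ⟪W, oXi n⟫ • oXi n + ⟪W, oZeta n⟫ • oZeta n := by
  have h : phi ∘ₗ phi = -LinearMap.id + (innerₗ (Osc n) (oXi n)).smulRight (oXi n)
      + (innerₗ (Osc n) (oZeta n)).smulRight (oZeta n) := by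
    apply Osc.linearMap_ext <;> intros <;> simp [hphi.he, hphi.hE, hphi.hxi, hphi.hzeta]
  rw [real_inner_comm (oXi n), real_inner_comm (oZeta n)]
  simpa using LinearMap.congr_fun h W

end IsPhi

namespace IsOscBracket
variable {n : ℕ} {lam : Fin n → ℝ} {br : Osc n →ₗ[ℝ] Osc n →ₗ[ℝ] Osc n}
  (hbr : IsOscBracket n lam br)
include hbr

lemma apply_self (X : Osc n) : br X X = 0 := by
  have h := hbr.anti X X
  rwa [eq_neg_iff_add_eq_zero, ← two_smul ℝ, smul_eq_zero, or_iff_right two_ne_zero] at h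

lemma zeta_xi : br (oZeta n) (oXi n) = 0 := by
  rw [hbr.anti, hbr.xize, neg_zero]

lemma inner_zeta_left (V W : Osc n) : ⟪br (oZeta n) V, W⟫ = -⟪V, br (oZeta n) W⟫ := by
  have h : (innerₗ (Osc n)).comp (br (oZeta n)) = -(innerₗ (Osc n)).compl₂ (br (oZeta n)) := by
    apply Osc.linearMap_ext <;> intros <;> apply Osc.linearMap_ext <;> intros <;>
      simp +contextual [hbr.zee, hbr.zeE, hbr.zeta_xi, hbr.apply_self, inner_smul_right]
  simpa using LinearMap.congr_fun₂ h V W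

lemma zeta_phi {phi : Osc n →ₗ[ℝ] Osc n} (hphi : IsPhi n phi) (W : Osc n) :
    br (oZeta n) (phi W) = phi (br (oZeta n) W) := by
  have h : br (oZeta n) ∘ₗ phi = phi ∘ₗ br (oZeta n) := by
    apply Osc.linearMap_ext <;> intros <;>
      simp [hbr.zee, hbr.zeE, hbr.zeta_xi, hbr.apply_self, hphi.he, hphi.hE, hphi.hxi, hphi.hzeta]
  exact LinearMap.congr_fun h W

lemma apply_eq_invariant {phi : Osc n →ₗ[ℝ] Osc n} (hphi : IsPhi n phi) (V W : Osc n) :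
    br V W = ⟪phi V, W⟫ • oXi n + ⟪V, oZeta n⟫ • br (oZeta n) W
      - ⟪W, oZeta n⟫ • br (oZeta n) V := by
  have hEe (i j : Fin n) : br (oE n i) (oe n j) = -(if i = j then oXi n else 0) := by
    rw [hbr.anti, hbr.eE]
    exact congrArg _ (if_congr eq_comm rfl rfl)
  have hez (i : Fin n) : br (oe n i) (oZeta n) = -(lam i • oE n i) := by
    rw [hbr.anti, hbr.zee]
  have hEz (i : Fin n) : br (oE n i) (oZeta n) = lam i • oe n i := by
    rw [hbr.anti, hbr.zeE, neg_neg]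
  have hxie (i : Fin n) : br (oXi n) (oe n i) = 0 := by
    rw [hbr.anti, hbr.exi, neg_zero]
  have hxiE (i : Fin n) : br (oXi n) (oE n i) = 0 := by
    rw [hbr.anti, hbr.Exi, neg_zero]
  have h : br = ((innerₗ (Osc n)).comp phi).compr₂ (LinearMap.toSpanSingleton ℝ _ (oXi n))
      + (innerₗ (Osc n) (oZeta n)).smulRight (br (oZeta n))
      - ((innerₗ (Osc n) (oZeta n)).smulRight (br (oZeta n))).flip := by
    apply Osc.linearMap_ext <;> intros <;> apply Osc.linearMap_ext <;> intros <;>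
      simp [hbr.ee, hbr.eE, hbr.EE, hbr.exi, hbr.Exi, hbr.zee, hbr.zeE, hbr.xize, hbr.zeta_xi,
        hbr.apply_self, hEe, hez, hEz, hxie, hxiE, hphi.he, hphi.hE, hphi.hxi, hphi.hzeta]
  rw [real_inner_comm (oZeta n), real_inner_comm (oZeta n)]
  simpa using LinearMap.congr_fun₂ h V W

lemma isOscillatorFrame {phi : Osc n →ₗ[ℝ] Osc n} (hphi : IsPhi n phi) :
    IsOscillatorFrame phi (br (oZeta n)) (oXi n) (oZeta n) where
  inner_φ_left := hphi.inner_apply_left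
  φ_φ := hphi.apply_apply
  φ_ξ := hphi.hxi
  inner_B_left := hbr.inner_zeta_left
  B_φ := hbr.zeta_phi hphi
  B_ξ := hbr.zeta_xi
  B_ζ := hbr.apply_self _
  inner_ξ_ξ := by simp
  inner_ξ_ζ := Osc.inner_oXi_oZeta

end IsOscBracket

theorem curvature_invariant_form_general (n : ℕ) (lam : Fin n → ℝ)
    (br nab : Osc n →ₗ[ℝ] Osc n →ₗ[ℝ] Osc n)
    (hbr : IsOscBracket n lam br) (hlc : IsLeviCivita n br nab)
    (phi : Osc n →ₗ[ℝ] Osc n) (hphi : IsPhi n phi) :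
    ∀ X Y Z : Osc n,
      curvR br nab X Y Z =
        ((1/2) * ⟪phi X, Y⟫) • phi Z
        + ((1/4) : ℝ) • (⟪phi X, Z⟫ • phi Y - ⟪phi Y, Z⟫ • phi X)
        + ((1/4) * ⟪Z, oXi n⟫) • (⟪Y, oXi n⟫ • X - ⟪X, oXi n⟫ • Y)
        + ((1/4) * (⟪X, oXi n⟫ * ⟪Y, Z⟫ - ⟪Y, oXi n⟫ * ⟪X, Z⟫)) • oXi n
        + ((1/4) * (⟪X, oXi n⟫ * ⟪Y, oZeta n⟫ - ⟪Y, oXi n⟫ * ⟪X, oZeta n⟫)) •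
            (⟪Z, oXi n⟫ • oZeta n - ⟪Z, oZeta n⟫ • oXi n) := by
  have F := hbr.isOscillatorFrame hphi
  have hbracket := hbr.apply_eq_invariant hphi
  exact F.curvature_eq hbracket (F.leviCivita_eq hbracket hlc)

/-- Lemma 3: invariant form of the Riemannian curvature tensor of the oscillator group. -/
theorem curvature_invariant_form (n : ℕ) (hn : 1 ≤ n) (lam : Fin n → ℝ)
    (br nab : Osc n →ₗ[ℝ] Osc n →ₗ[ℝ] Osc n)
    (hbr : IsOscBracket n lam br) (hlc : IsLeviCivita n br nab)
    (phi : Osc n →ₗ[ℝ] Osc n) (hphi : IsPhi n phi) :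
    ∀ X Y Z : Osc n,
      curvR br nab X Y Z =
        ((1/2) * ⟪phi X, Y⟫) • phi Z
        + ((1/4) : ℝ) • (⟪phi X, Z⟫ • phi Y - ⟪phi Y, Z⟫ • phi X)
        + ((1/4) * ⟪Z, oXi n⟫) • (⟪Y, oXi n⟫ • X - ⟪X, oXi n⟫ • Y)
        + ((1/4) * (⟪X, oXi n⟫ * ⟪Y, Z⟫ - ⟪Y, oXi n⟫ * ⟪X, Z⟫)) • oXi n
        + ((1/4) * (⟪X, oXi n⟫ * ⟪Y, oZeta n⟫ - ⟪Y, oXi n⟫ * ⟪X, oZeta n⟫)) •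
            (⟪Z, oXi n⟫ • oZeta n - ⟪Z, oZeta n⟫ • oXi n) :=
  curvature_invariant_form_general n lam br nab hbr hlc phi hphi
end
end

section
/- Let V ∈ span(e₁, …, e_{2n}) be a unit vector of the oscillator algebra 𝔤ₙ(λ). Then A_V(φV) = (1/2) ξ, (∇_{φV} A_V)(φV) = (1/4) V, and R(V, A_V(φV)) φV = 0. -/
open scoped RealInnerProductSpace
open Finset

noncomputable section

section Aux

variable {n : ℕ}

/-- The span of the `eᵢ, e_{n+i}`. -/
def Ssub (n : ℕ) : Submodule ℝ (Osc n) :=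
  Submodule.span ℝ (Set.range (oe n) ∪ Set.range (oE n))

lemma inner_single_single (i j : Fin (2*n+2)) :
    ⟪(EuclideanSpace.single i 1 : Osc n), EuclideanSpace.single j 1⟫ =
      if i = j then 1 else 0 := by
  simp [EuclideanSpace.inner_single_left, EuclideanSpace.single_apply, eq_comm]

@[simp] lemma inner_oe_oe (i j : Fin n) :
    ⟪oe n i, oe n j⟫ = if i = j then 1 else 0 := by
  rw [oe, oe, inner_single_single]
  by_cases h : i = j
  · simp [h]
  · rw [if_neg h, if_neg]
    intro hc
    exact h (Fin.ext (by simpa [Fin.ext_iff] using hc))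

@[simp] lemma inner_oE_oE (i j : Fin n) :
    ⟪oE n i, oE n j⟫ = if i = j then 1 else 0 := by
  rw [oE, oE, inner_single_single]
  by_cases h : i = j
  · simp [h]
  · rw [if_neg h, if_neg]
    intro hc
    have : n + i.1 = n + j.1 := by simpa [Fin.ext_iff] using hc
    exact h (Fin.ext (by omega))

@[simp] lemma inner_oe_oE (i j : Fin n) : ⟪oe n i, oE n j⟫ = 0 := by
  rw [oe, oE, inner_single_single, if_neg]
  intro hc
  have : i.1 = n + j.1 := by simpa [Fin.ext_iff] using hc
  have := i.2; omega

@[simp] lemma inner_oE_oe (i j : Fin n) : ⟪oE n i, oe n j⟫ = 0 := by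
  rw [real_inner_comm]; exact inner_oe_oE j i

@[simp] lemma inner_oe_xi (i : Fin n) : ⟪oe n i, oXi n⟫ = 0 := by
  rw [oe, oXi, inner_single_single, if_neg]
  intro hc
  have : i.1 = 2*n := by simpa [Fin.ext_iff] using hc
  have := i.2; omega

@[simp] lemma inner_oE_xi (i : Fin n) : ⟪oE n i, oXi n⟫ = 0 := by
  rw [oE, oXi, inner_single_single, if_neg]
  intro hc
  have : n + i.1 = 2*n := by simpa [Fin.ext_iff] using hc
  have := i.2; omega

@[simp] lemma inner_oe_zeta (i : Fin n) : ⟪oe n i, oZeta n⟫ = 0 := by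
  rw [oe, oZeta, inner_single_single, if_neg]
  intro hc
  have : i.1 = 2*n+1 := by simpa [Fin.ext_iff] using hc
  have := i.2; omega

@[simp] lemma inner_oE_zeta (i : Fin n) : ⟪oE n i, oZeta n⟫ = 0 := by
  rw [oE, oZeta, inner_single_single, if_neg]
  intro hc
  have : n + i.1 = 2*n+1 := by simpa [Fin.ext_iff] using hc
  have := i.2; omega

@[simp] lemma inner_xi_oe (i : Fin n) : ⟪oXi n, oe n i⟫ = 0 := by
  rw [real_inner_comm]; exact inner_oe_xi i

@[simp] lemma inner_xi_oE (i : Fin n) : ⟪oXi n, oE n i⟫ = 0 := by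
  rw [real_inner_comm]; exact inner_oE_xi i

@[simp] lemma inner_zeta_oe (i : Fin n) : ⟪oZeta n, oe n i⟫ = 0 := by
  rw [real_inner_comm]; exact inner_oe_zeta i

@[simp] lemma inner_zeta_oE (i : Fin n) : ⟪oZeta n, oE n i⟫ = 0 := by
  rw [real_inner_comm]; exact inner_oE_zeta i

@[simp] lemma inner_xi_xi : ⟪oXi n, oXi n⟫ = 1 := by
  rw [oXi, inner_single_single, if_pos rfl]

@[simp] lemma inner_zeta_zeta : ⟪oZeta n, oZeta n⟫ = 1 := by
  rw [oZeta, inner_single_single, if_pos rfl]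

@[simp] lemma inner_xi_zeta : ⟪oXi n, oZeta n⟫ = 0 := by
  rw [oXi, oZeta, inner_single_single, if_neg]
  intro hc
  have : 2*n = 2*n+1 := by simpa [Fin.ext_iff] using hc
  omega

@[simp] lemma inner_zeta_xi : ⟪oZeta n, oXi n⟫ = 0 := by
  rw [real_inner_comm]; exact inner_xi_zeta

/-- Induction principle for membership in `Ssub`. -/
lemma Ssub_ind {P : Osc n → Prop}
    (he : ∀ i, P (oe n i)) (hE : ∀ i, P (oE n i))
    (h0 : P 0) (hadd : ∀ x y, P x → P y → P (x + y))
    (hsmul : ∀ (a : ℝ) x, P x → P (a • x)) :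
    ∀ W ∈ Ssub n, P W := by
  intro W hW
  induction hW using Submodule.span_induction with
  | mem x hx =>
    rcases hx with ⟨i, rfl⟩ | ⟨i, rfl⟩
    · exact he i
    · exact hE i
  | zero => exact h0
  | add x y _ _ hx hy => exact hadd x y hx hy
  | smul a x _ hx => exact hsmul a x hx

lemma oe_mem (i : Fin n) : oe n i ∈ Ssub n :=
  Submodule.subset_span (Or.inl ⟨i, rfl⟩)

lemma oE_mem (i : Fin n) : oE n i ∈ Ssub n :=
  Submodule.subset_span (Or.inr ⟨i, rfl⟩)

/-- `ξ` is orthogonal to the span. -/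
lemma inner_xi_S : ∀ W ∈ Ssub n, ⟪oXi n, W⟫ = 0 := by
  apply Ssub_ind
  · exact inner_xi_oe
  · exact inner_xi_oE
  · exact inner_zero_right _
  · intro x y hx hy; rw [inner_add_right, hx, hy]; ring
  · intro a x hx; rw [real_inner_smul_right, hx]; ring

/-- `ζ` is orthogonal to the span. -/
lemma inner_zeta_S : ∀ W ∈ Ssub n, ⟪oZeta n, W⟫ = 0 := by
  apply Ssub_ind
  · exact inner_zeta_oe
  · exact inner_zeta_oE
  · exact inner_zero_right _
  · intro x y hx hy; rw [inner_add_right, hx, hy]; ring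
  · intro a x hx; rw [real_inner_smul_right, hx]; ring

/-- Extensionality via inner products against the span and `ξ, ζ`. -/
lemma ext_of_inner {A B : Osc n}
    (hS : ∀ Z ∈ Ssub n, ⟪A, Z⟫ = ⟪B, Z⟫)
    (hxi : ⟪A, oXi n⟫ = ⟪B, oXi n⟫)
    (hzeta : ⟪A, oZeta n⟫ = ⟪B, oZeta n⟫) : A = B := by
  apply ext_inner_right ℝ
  intro v
  have hv : v ∈ Submodule.span ℝ
      ((Set.range (oe n) ∪ Set.range (oE n)) ∪ {oXi n, oZeta n}) := by
    have hb := (EuclideanSpace.basisFun (Fin (2*n+2)) ℝ).toBasis.span_eq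
    rw [OrthonormalBasis.coe_toBasis] at hb
    have hsub : Set.range ⇑(EuclideanSpace.basisFun (Fin (2*n+2)) ℝ) ⊆
        (Set.range (oe n) ∪ Set.range (oE n)) ∪ {oXi n, oZeta n} := by
      rintro _ ⟨m, rfl⟩
      rw [EuclideanSpace.basisFun_apply]
      rcases lt_or_ge m.1 n with h | h
      · exact Or.inl (Or.inl ⟨⟨m.1, h⟩, by rw [oe]⟩)
      · rcases lt_or_ge m.1 (2*n) with h2 | h2
        · refine Or.inl (Or.inr ⟨⟨m.1 - n, by omega⟩, ?_⟩)
          rw [oE]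
          exact congrArg (fun k : Fin (2*n+2) => EuclideanSpace.single k (1:ℝ))
            (Fin.ext (show n + (m.1 - n) = m.1 by omega))
        · rcases Nat.lt_or_ge m.1 (2*n+1) with h3 | h3
          · refine Or.inr (Or.inl ?_)
            rw [oXi]
            exact congrArg (fun k : Fin (2*n+2) => EuclideanSpace.single k (1:ℝ))
              (Fin.ext (show m.1 = 2*n by omega))
          · refine Or.inr (Or.inr ?_)
            rw [oZeta]
            exact congrArg (fun k : Fin (2*n+2) => EuclideanSpace.single k (1:ℝ))
              (Fin.ext (show m.1 = 2*n+1 by have := m.2; omega))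
    exact Submodule.span_mono hsub (by rw [hb]; trivial)
  induction hv using Submodule.span_induction with
  | mem x hx =>
    rcases hx with hx | hx
    · exact hS x (Submodule.subset_span hx)
    · rcases hx with rfl | rfl
      · exact hxi
      · exact hzeta
  | zero => simp
  | add x y _ _ hx hy => rw [inner_add_right, inner_add_right, hx, hy]
  | smul a x _ hx => rw [real_inner_smul_right, real_inner_smul_right, hx]

end Aux

section Facts

variable {n : ℕ} {lam : Fin n → ℝ} {br nab : Osc n →ₗ[ℝ] Osc n →ₗ[ℝ] Osc n}
  {phi : Osc n →ₗ[ℝ] Osc n}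

lemma br_self (hbr : IsOscBracket n lam br) (X : Osc n) : br X X = 0 := by
  have h := hbr.anti X X
  have h2 : (2:ℝ) • br X X = 0 := by
    rw [two_smul]; nth_rewrite 1 [h]; rw [neg_add_cancel]
  rcases smul_eq_zero.mp h2 with h | h
  · norm_num at h
  · exact h

lemma br_S_xi (hbr : IsOscBracket n lam br) :
    ∀ W ∈ Ssub n, br W (oXi n) = 0 := by
  apply Ssub_ind
  · exact hbr.exi
  · exact hbr.Exi
  · simp
  · intro x y hx hy; rw [map_add, LinearMap.add_apply, hx, hy, add_zero]
  · intro a x hx; rw [map_smul, LinearMap.smul_apply, hx, smul_zero]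

lemma br_xi_S (hbr : IsOscBracket n lam br) :
    ∀ Z ∈ Ssub n, br (oXi n) Z = 0 := by
  intro Z hZ
  rw [hbr.anti, br_S_xi hbr Z hZ, neg_zero]

lemma phi_S (hphi : IsPhi n phi) : ∀ W ∈ Ssub n, phi W ∈ Ssub n := by
  apply Ssub_ind
  · intro i; rw [hphi.he]; exact oE_mem i
  · intro i; rw [hphi.hE]; exact neg_mem (oe_mem i)
  · rw [map_zero]; exact zero_mem _
  · intro x y hx hy; rw [map_add]; exact add_mem hx hy
  · intro a x hx; rw [map_smul]; exact Submodule.smul_mem _ a hx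

lemma phi_phi (hphi : IsPhi n phi) : ∀ W ∈ Ssub n, phi (phi W) = -W := by
  apply Ssub_ind
  · intro i; rw [hphi.he, hphi.hE]
  · intro i; rw [hphi.hE, map_neg, hphi.he]
  · simp
  · intro x y hx hy; rw [map_add, map_add, hx, hy, neg_add]
  · intro a x hx; rw [map_smul, map_smul, hx, smul_neg]

lemma phi_skew (hphi : IsPhi n phi) :
    ∀ W ∈ Ssub n, ∀ Z ∈ Ssub n, ⟪phi W, Z⟫ = -⟪W, phi Z⟫ := by
  apply Ssub_ind (P := fun W => ∀ Z ∈ Ssub n, ⟪phi W, Z⟫ = -⟪W, phi Z⟫)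
  · intro i
    apply Ssub_ind
    · intro j; rw [hphi.he, hphi.he, inner_oE_oe, inner_oe_oE, neg_zero]
    · intro j; rw [hphi.he, hphi.hE, inner_neg_right, inner_oE_oE, inner_oe_oe, neg_neg]
    · simp
    · intro x y hx hy; rw [map_add, inner_add_right, inner_add_right, hx, hy]; ring
    · intro a x hx; rw [map_smul, real_inner_smul_right, real_inner_smul_right, hx]; ring
  · intro i
    apply Ssub_ind
    · intro j; rw [hphi.hE, hphi.he, inner_neg_left, inner_oe_oe, inner_oE_oE]
    · intro j
      rw [hphi.hE, hphi.hE, inner_neg_left, inner_neg_right, inner_oe_oE, inner_oE_oe]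
      norm_num
    · simp
    · intro x y hx hy; rw [map_add, inner_add_right, inner_add_right, hx, hy]; ring
    · intro a x hx; rw [map_smul, real_inner_smul_right, real_inner_smul_right, hx]; ring
  · intro Z hZ; simp
  · intro x y hx hy Z hZ
    rw [map_add, inner_add_left, inner_add_left, hx Z hZ, hy Z hZ]; ring
  · intro a x hx Z hZ
    rw [map_smul, real_inner_smul_left, real_inner_smul_left, hx Z hZ]; ring

lemma br_SS (hbr : IsOscBracket n lam br) (hphi : IsPhi n phi) :
    ∀ X ∈ Ssub n, ∀ W ∈ Ssub n, br X W = ⟪phi X, W⟫ • oXi n := by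
  apply Ssub_ind (P := fun X => ∀ W ∈ Ssub n, br X W = ⟪phi X, W⟫ • oXi n)
  · intro i
    apply Ssub_ind
    · intro j; rw [hbr.ee, hphi.he, inner_oE_oe, zero_smul]
    · intro j
      rw [hbr.eE, hphi.he, inner_oE_oE]
      split_ifs <;> simp
    · simp
    · intro x y hx hy; rw [map_add, hx, hy, inner_add_right, add_smul]
    · intro a x hx; rw [map_smul, hx, real_inner_smul_right, smul_smul]
  · intro i
    apply Ssub_ind
    · intro j
      rw [hbr.anti, hbr.eE, hphi.hE, inner_neg_left, inner_oe_oe]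
      by_cases h : i = j
      · subst h; simp
      · rw [if_neg h, if_neg (fun hc => h hc.symm)]; simp
    · intro j; rw [hbr.EE, hphi.hE, inner_neg_left, inner_oe_oE, neg_zero, zero_smul]
    · simp
    · intro x y hx hy; rw [map_add, hx, hy, inner_add_right, add_smul]
    · intro a x hx; rw [map_smul, hx, real_inner_smul_right, smul_smul]
  · intro W hW; simp
  · intro x y hx hy W hW
    rw [map_add, LinearMap.add_apply, hx W hW, hy W hW, map_add, inner_add_left, add_smul]
  · intro a x hx W hW
    rw [map_smul, LinearMap.smul_apply, hx W hW, map_smul, real_inner_smul_left, smul_smul]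

lemma br_zeta_mem (hbr : IsOscBracket n lam br) :
    ∀ W ∈ Ssub n, br (oZeta n) W ∈ Ssub n := by
  apply Ssub_ind
  · intro j; rw [hbr.zee]; exact Submodule.smul_mem _ _ (oE_mem j)
  · intro j; rw [hbr.zeE]; exact neg_mem (Submodule.smul_mem _ _ (oe_mem j))
  · rw [map_zero]; exact zero_mem _
  · intro x y hx hy; rw [map_add]; exact add_mem hx hy
  · intro a x hx; rw [map_smul]; exact Submodule.smul_mem _ a hx

lemma br_zeta_skew (hbr : IsOscBracket n lam br) :
    ∀ W ∈ Ssub n, ∀ U ∈ Ssub n,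
      ⟪br (oZeta n) W, U⟫ = -⟪br (oZeta n) U, W⟫ := by
  apply Ssub_ind (P := fun W => ∀ U ∈ Ssub n,
      ⟪br (oZeta n) W, U⟫ = -⟪br (oZeta n) U, W⟫)
  · intro j
    apply Ssub_ind
    · intro k
      rw [hbr.zee, hbr.zee, real_inner_smul_left, real_inner_smul_left,
        inner_oE_oe, inner_oE_oe]
      ring
    · intro k; rw [hbr.zee, hbr.zeE, real_inner_smul_left, inner_neg_left,
        real_inner_smul_left, inner_oE_oE, inner_oe_oe]
      by_cases h : j = k
      · subst h; simp
      · rw [if_neg h, if_neg (Ne.symm h)]; ring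
    · simp
    · intro x y hx hy; rw [map_add, inner_add_right, inner_add_left, hx, hy]; ring
    · intro a x hx
      rw [map_smul, real_inner_smul_right, real_inner_smul_left, hx]; ring
  · intro j
    apply Ssub_ind
    · intro k; rw [hbr.zeE, hbr.zee, real_inner_smul_left, inner_neg_left,
        real_inner_smul_left, inner_oE_oE, inner_oe_oe]
      by_cases h : j = k
      · subst h; simp
      · rw [if_neg h, if_neg (Ne.symm h)]; ring
    · intro k
      rw [hbr.zeE, hbr.zeE, inner_neg_left, inner_neg_left,
        real_inner_smul_left, real_inner_smul_left, inner_oe_oE, inner_oe_oE]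
      ring
    · simp
    · intro x y hx hy; rw [map_add, inner_add_right, inner_add_left, hx, hy]; ring
    · intro a x hx
      rw [map_smul, real_inner_smul_right, real_inner_smul_left, hx]; ring
  · intro U hU; simp
  · intro x y hx hy U hU
    rw [map_add, inner_add_left, hx U hU, hy U hU, inner_add_right]; ring
  · intro a x hx U hU
    rw [LinearMap.map_smul, real_inner_smul_left, hx U hU, real_inner_smul_right]; ring

end Facts

section Nab

variable {n : ℕ} {lam : Fin n → ℝ} {br nab : Osc n →ₗ[ℝ] Osc n →ₗ[ℝ] Osc n}
  {phi : Osc n →ₗ[ℝ] Osc n}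

/-- `∇_X W = (⟪φX, W⟫/2) ξ` for `X, W` in the span of the `eᵢ, e_{n+i}`. -/
lemma nab_SS (hbr : IsOscBracket n lam br) (hlc : IsLeviCivita n br nab)
    (hphi : IsPhi n phi) :
    ∀ X ∈ Ssub n, ∀ W ∈ Ssub n, nab X W = (⟪phi X, W⟫ / 2) • oXi n := by
  intro X hX W hW
  apply ext_of_inner
  · intro Z hZ
    have hk := hlc X W Z
    rw [br_SS hbr hphi X hX W hW, br_SS hbr hphi W hW Z hZ,
      br_SS hbr hphi Z hZ X hX, real_inner_smul_left, real_inner_smul_left,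
      real_inner_smul_left, inner_xi_S Z hZ, inner_xi_S X hX, inner_xi_S W hW] at hk
    rw [real_inner_smul_left, inner_xi_S Z hZ]
    linarith
  · have hk := hlc X W (oXi n)
    rw [br_SS hbr hphi X hX W hW, br_S_xi hbr W hW, br_xi_S hbr X hX,
      real_inner_smul_left, inner_xi_xi, inner_zero_left, inner_zero_left] at hk
    rw [real_inner_smul_left, inner_xi_xi]
    linarith
  · have hk := hlc X W (oZeta n)
    rw [br_SS hbr hphi X hX W hW, hbr.anti W (oZeta n), inner_neg_left,
      br_zeta_skew hbr X hX W hW, real_inner_smul_left, inner_xi_zeta] at hk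
    rw [real_inner_smul_left, inner_xi_zeta]
    linarith
  
/-- `∇_W ξ = -(1/2) φW` for `W` in the span of the `eᵢ, e_{n+i}`. -/
lemma nab_S_xi (hbr : IsOscBracket n lam br) (hlc : IsLeviCivita n br nab)
    (hphi : IsPhi n phi) :
    ∀ W ∈ Ssub n, nab W (oXi n) = (-(1/2) : ℝ) • phi W := by
  intro W hW
  have hfW : phi W ∈ Ssub n := phi_S hphi W hW
  apply ext_of_inner
  · intro Z hZ
    have hk := hlc W (oXi n) Z
    rw [br_S_xi hbr W hW, br_xi_S hbr Z hZ, br_SS hbr hphi Z hZ W hW,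
      real_inner_smul_left, inner_xi_xi, phi_skew hphi Z hZ W hW] at hk
    simp only [inner_zero_left, neg_zero] at hk
    rw [real_inner_smul_left]
    have hc := real_inner_comm Z (phi W)
    linarith
  · have hk := hlc W (oXi n) (oXi n)
    rw [br_S_xi hbr W hW, br_self hbr, br_xi_S hbr W hW] at hk
    simp only [inner_zero_left, neg_zero] at hk
    rw [real_inner_smul_left]
    have h0 := inner_xi_S _ hfW
    have hc := real_inner_comm (phi W) (oXi n)
    linarith
  · have hk := hlc W (oXi n) (oZeta n)
    rw [br_S_xi hbr W hW, hbr.xize] at hk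
    simp only [inner_zero_left, neg_zero] at hk
    rw [real_inner_smul_left]
    have h1 := inner_xi_S _ (br_zeta_mem hbr W hW)
    have hc1 := real_inner_comm ((br (oZeta n)) W) (oXi n)
    have h2 := inner_zeta_S _ hfW
    have hc2 := real_inner_comm (phi W) (oZeta n)
    linarith

/-- `∇_ξ W = -(1/2) φW` for `W` in the span of the `eᵢ, e_{n+i}`. -/
lemma nab_xi_S (hbr : IsOscBracket n lam br) (hlc : IsLeviCivita n br nab)
    (hphi : IsPhi n phi) :
    ∀ W ∈ Ssub n, nab (oXi n) W = (-(1/2) : ℝ) • phi W := by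
  intro W hW
  have hfW : phi W ∈ Ssub n := phi_S hphi W hW
  apply ext_of_inner
  · intro Z hZ
    have hk := hlc (oXi n) W Z
    rw [br_xi_S hbr W hW, br_SS hbr hphi W hW Z hZ, br_S_xi hbr Z hZ,
      real_inner_smul_left, inner_xi_xi] at hk
    simp only [inner_zero_left, neg_zero] at hk
    rw [real_inner_smul_left]
    linarith
  · have hk := hlc (oXi n) W (oXi n)
    rw [br_xi_S hbr W hW, br_S_xi hbr W hW, br_self hbr] at hk
    simp only [inner_zero_left, neg_zero] at hk
    rw [real_inner_smul_left]
    have h0 := inner_xi_S _ hfW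
    have hc := real_inner_comm (phi W) (oXi n)
    linarith
  · have hk := hlc (oXi n) W (oZeta n)
    rw [br_xi_S hbr W hW, hbr.anti W (oZeta n), inner_neg_left,
      hbr.anti (oZeta n) (oXi n), hbr.xize] at hk
    simp only [inner_zero_left, neg_zero] at hk
    rw [real_inner_smul_left]
    have h1 := inner_xi_S _ (br_zeta_mem hbr W hW)
    have hc1 := real_inner_comm ((br (oZeta n)) W) (oXi n)
    have h2 := inner_zeta_S _ hfW
    have hc2 := real_inner_comm (phi W) (oZeta n)
    linarith

/-- `∇_ξ ξ = 0`. -/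
lemma nab_xi_xi (hbr : IsOscBracket n lam br) (hlc : IsLeviCivita n br nab) :
    nab (oXi n) (oXi n) = 0 := by
  apply ext_of_inner
  · intro Z hZ
    have hk := hlc (oXi n) (oXi n) Z
    rw [br_self hbr, br_xi_S hbr Z hZ, br_S_xi hbr Z hZ] at hk
    simp only [inner_zero_left, neg_zero] at hk
    rw [inner_zero_left]
    linarith
  · have hk := hlc (oXi n) (oXi n) (oXi n)
    rw [br_self hbr] at hk
    simp only [inner_zero_left, neg_zero] at hk
    rw [inner_zero_left]
    linarith
  · have hk := hlc (oXi n) (oXi n) (oZeta n)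
    rw [br_self hbr, hbr.xize, hbr.anti (oZeta n) (oXi n), hbr.xize] at hk
    simp only [inner_zero_left, neg_zero] at hk
    rw [inner_zero_left]
    linarith

end Nab

/-- For a unit `V ∈ span(e₁,…,e_{2n})`: `A_V(φV) = ½ ξ`, `(∇_{φV} A_V)(φV) = ¼ V`,
and `R(V, A_V(φV)) φV = 0`. -/
theorem computations_phiV (n : ℕ) (hn : 1 ≤ n) (lam : Fin n → ℝ)
    (br nab : Osc n →ₗ[ℝ] Osc n →ₗ[ℝ] Osc n)
    (hbr : IsOscBracket n lam br) (hlc : IsLeviCivita n br nab)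
    (phi : Osc n →ₗ[ℝ] Osc n) (hphi : IsPhi n phi)
    (V : Osc n)
    (hV : V ∈ Submodule.span ℝ (Set.range (oe n) ∪ Set.range (oE n)))
    (hVunit : ‖V‖ = 1) :
    nomizu nab V (phi V) = ((1/2) : ℝ) • oXi n ∧
    covNomizu nab V (phi V) (phi V) = ((1/4) : ℝ) • V ∧
    curvR br nab V (nomizu nab V (phi V)) (phi V) = 0 := by
  have hP : phi V ∈ Ssub n := phi_S hphi V hV
  have hVV : ⟪V, V⟫ = 1 := by
    rw [real_inner_self_eq_norm_sq, hVunit]; norm_num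
  have hskew := phi_skew hphi V hV V hV
  have hcomm := real_inner_comm V (phi V)
  have hVphiV : ⟪phi V, V⟫ = 0 := by linarith
  have hphiVV : ⟪V, phi V⟫ = 0 := by linarith
  have hpp : phi (phi V) = -V := phi_phi hphi V hV
  have c1 : ⟪phi (phi V), V⟫ = -1 := by rw [hpp, inner_neg_left, hVV]
  have c2 : ⟪phi (phi V), phi V⟫ = 0 := by rw [hpp, inner_neg_left, hphiVV, neg_zero]
  have c3 : ⟪phi V, phi V⟫ = 1 := by
    rw [phi_skew hphi V hV (phi V) hP, hpp, inner_neg_right, hVV]; norm_num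
  have hA : nab (phi V) V = ((-1:ℝ)/2) • oXi n := by
    rw [nab_SS hbr hlc hphi (phi V) hP V hV, c1]
  have g1 : nomizu nab V (phi V) = ((1/2) : ℝ) • oXi n := by
    simp only [nomizu]; rw [hA]; module
  have hB : nab (phi V) (phi V) = 0 := by
    rw [nab_SS hbr hlc hphi (phi V) hP (phi V) hP, c2]; norm_num
  have hC : nab V (phi V) = ((1/2) : ℝ) • oXi n := by
    rw [nab_SS hbr hlc hphi V hV (phi V) hP, c3]
  have hD : nab V V = 0 := by
    rw [nab_SS hbr hlc hphi V hV V hV, hVphiV]; norm_num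
  refine ⟨g1, ?_, ?_⟩
  · simp only [covNomizu]
    rw [g1, hB]
    simp only [nomizu, map_zero, LinearMap.zero_apply, neg_zero, sub_zero]
    rw [map_smul, nab_S_xi hbr hlc hphi (phi V) hP, hpp]
    module
  · simp only [curvR]
    rw [g1]
    have h1 : nab (((1/2):ℝ) • oXi n) (phi V) = ((1/4):ℝ) • V := by
      rw [map_smul, LinearMap.smul_apply, nab_xi_S hbr hlc hphi (phi V) hP, hpp]
      module
    have h2 : br V (((1/2):ℝ) • oXi n) = 0 := by
      rw [map_smul, br_S_xi hbr V hV, smul_zero]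
    have h3 : nab V (((1/4):ℝ) • V) = 0 := by
      rw [map_smul, hD, smul_zero]
    have h4 : nab (((1/2):ℝ) • oXi n) (((1/2):ℝ) • oXi n) = 0 := by
      rw [map_smul, map_smul nab, LinearMap.smul_apply, nab_xi_xi hbr hlc]
      simp
    rw [h1, hC, h2, h3, h4, map_zero, LinearMap.zero_apply]
    simp
end
end
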